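/- Let K be an algebraically closed field of characteristic 0 and a, b, c ∈ K, not all zero. For t ∈ K let γ(t) denote the 3×3 matrix with rows (1,0,0), (a·t,1,0), (b·t+(a·c/2)·t², c·t, 1). If F ∈ K[x,y,z] is irreducible and homogeneous, and for every t ∈ K there exists λ(t) ∈ K, λ(t) ≠ 0, with F∘γ(t) = λ(t)·F, then the degree of F is at most 2. -/

import Mathlib

/-!
The zero set of `F` is a union of orbits of `γ`. If `a = 0`, the orbit of `(x, y, z)` is the line
`(x, y, z + t (b x + c y))`, which meets `z = 0` in `x • (1, y / x, 0)` when `x (b x + c y) ≠ 0`.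
If `a ≠ 0`, the quadric `Q = 2a x z - 2b x y - c y²` is invariant and the orbit of a point with
`x ≠ 0` meets `y = 0` in `x • (1, 0, Q / (2a x²))`. So, off a curve of degree at most two, whether
`F` vanishes at `v` depends only on whether the invariant `y / x`, resp. `Q / (2a x²)`, is a root of
the restriction `g` of `F` to a line. As `F ≠ 0`, `g ≠ 0`, and the zero set of `F` lies in the
union of that curve and finitely many level sets of the invariant, each a line or a conic. By the
Nullstellensatz the prime `F` divides the product of these, hence one of them.
-/

open MvPolynomial
open scoped Matrix

/-- The polynomial `F ∘ M`, obtained by substituting the variable `i` by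
`∑ j, M i j * X j` in `F`. -/
noncomputable def applyMatrix {K : Type*} [Field K]
    (M : Matrix (Fin 3) (Fin 3) K) (F : MvPolynomial (Fin 3) K) :
    MvPolynomial (Fin 3) K :=
  aeval (fun i => ∑ j : Fin 3, C (M i j) * X j) F

namespace MvPolynomial

section Semiring

variable {σ R : Type*} [CommSemiring R]

theorem IsHomogeneous.eval_smul {F : MvPolynomial σ R} {d : ℕ} (hF : F.IsHomogeneous d)
    (s : R) (v : σ → R) : eval (s • v) F = s ^ d * eval v F := by
  rw [eval_eq, eval_eq, Finset.mul_sum]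
  refine Finset.sum_congr rfl fun m hm => ?_
  have hdeg : ∑ i ∈ m.support, m i = d := by
    rw [← Finsupp.degree_apply, Finsupp.degree_eq_weight_one]
    exact hF (mem_support_iff.mp hm)
  simp only [Pi.smul_apply, smul_eq_mul, mul_pow, Finset.prod_mul_distrib,
    Finset.prod_pow_eq_pow_sum, hdeg]
  ring

theorem IsHomogeneous.eval_smul_eq_zero_iff [NoZeroDivisors R] {F : MvPolynomial σ R} {d : ℕ}
    (hF : F.IsHomogeneous d) {s : R} (hs : s ≠ 0) (v : σ → R) :
    eval (s • v) F = 0 ↔ eval v F = 0 := by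
  rw [hF.eval_smul, mul_eq_zero, or_iff_right (pow_ne_zero d hs)]

theorem polynomial_eval_aeval (p : σ → Polynomial R) (F : MvPolynomial σ R) (s : R) :
    (aeval p F).eval s = eval (fun i => (p i).eval s) F := by
  simpa [Polynomial.coe_aeval_eq_eval, coe_aeval_eq_eval] using
    comp_aeval_apply p (Polynomial.aeval s) F

end Semiring

variable {σ K : Type*} [Field K] [IsAlgClosed K] [Finite σ]

theorem dvd_of_forall_eval_eq_zero {p q : MvPolynomial σ K} (hp : Prime p)
    (h : ∀ v, eval v p = 0 → eval v q = 0) : p ∣ q := by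
  have := (Ideal.span_singleton_prime hp.ne_zero).mpr hp
  rw [← Ideal.mem_span_singleton, ← IsPrime.vanishingIdeal_zeroLocus (K := K) (Ideal.span {p}),
    mem_vanishingIdeal_iff]
  intro v hv
  exact h v (by simpa using (mem_zeroLocus_iff.mp hv) p (Ideal.subset_span rfl))

theorem totalDegree_le_of_eval_eq_zero_iff_isRoot {F N : MvPolynomial σ K} {g : Polynomial K}
    {s : (σ → K) → K} {fac : K → MvPolynomial σ K} {k : ℕ} (hF : Prime F) (hN : N ≠ 0)
    (hNk : N.totalDegree ≤ k) (hfac : ∀ r, fac r ≠ 0) (hfack : ∀ r, (fac r).totalDegree ≤ k)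
    (hfac_eval : ∀ v, eval v N ≠ 0 → eval v (fac (s v)) = 0)
    (hiff : ∀ v, eval v N ≠ 0 → (eval v F = 0 ↔ g.IsRoot (s v))) :
    F.totalDegree ≤ k := by
  by_cases hg : g = 0
  · refine absurd (MvPolynomial.funext fun v => ?_) (mul_ne_zero hN hF.ne_zero)
    by_cases hv : eval v N = 0
    · simp [hv]
    · simp [(hiff v hv).2 (by simp [hg])]
  have hdvd : F ∣ N * (g.roots.map fac).prod := by
    refine dvd_of_forall_eval_eq_zero hF fun v hv => ?_
    by_cases hNv : eval v N = 0
    · simp [hNv]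
    have hroot : s v ∈ g.roots := (Polynomial.mem_roots hg).mpr ((hiff v hNv).mp hv)
    rw [map_mul, map_multiset_prod, Multiset.map_map]
    exact mul_eq_zero_of_right _ (Multiset.prod_eq_zero
      (Multiset.mem_map.mpr ⟨s v, hroot, hfac_eval v hNv⟩))
  rcases hF.dvd_or_dvd hdvd with hFN | hFprod
  · exact (totalDegree_le_of_dvd_of_isDomain hFN hN).trans hNk
  · obtain ⟨q, hq, hFq⟩ := hF.exists_mem_multiset_dvd hFprod
    obtain ⟨r, -, rfl⟩ := Multiset.mem_map.mp hq
    exact (totalDegree_le_of_dvd_of_isDomain hFq (hfac r)).trans (hfack r)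

end MvPolynomial

section Unipotent

variable {K : Type*} [Field K]

def unipotent (a b c t : K) : Matrix (Fin 3) (Fin 3) K :=
  !![1, 0, 0; a * t, 1, 0; b * t + (a * c / 2) * t ^ 2, c * t, 1]

theorem eval_applyMatrix (M : Matrix (Fin 3) (Fin 3) K) (F : MvPolynomial (Fin 3) K)
    (v : Fin 3 → K) : eval v (applyMatrix M F) = eval (M *ᵥ v) F := by
  rw [applyMatrix, aeval_eq_bind₁, hom_bind₁]
  congr
  · ext; simp
  · ext i; simp [Matrix.mulVec, dotProduct]

theorem unipotent_mulVec (a b c t : K) (v : Fin 3 → K) :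
    unipotent a b c t *ᵥ v =
      ![v 0, a * t * v 0 + v 1, (b * t + a * c / 2 * t ^ 2) * v 0 + c * t * v 1 + v 2] := by
  ext i
  fin_cases i <;> simp [unipotent, Matrix.vecHead, Matrix.vecTail, add_assoc]

theorem unipotent_zero_mulVec_eq_smul (b c : K) {v : Fin 3 → K} (hv0 : v 0 ≠ 0)
    (hL : b * v 0 + c * v 1 ≠ 0) :
    unipotent 0 b c (-v 2 / (b * v 0 + c * v 1)) *ᵥ v = v 0 • ![1, v 1 / v 0, 0] := by
  rw [unipotent_mulVec]
  ext i
  fin_cases i <;> simp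
  · field_simp
  · field_simp; ring

theorem unipotent_mulVec_eq_smul [CharZero K] {a : K} (ha : a ≠ 0) (b c : K) {v : Fin 3 → K}
    (hv0 : v 0 ≠ 0) :
    unipotent a b c (-v 1 / (a * v 0)) *ᵥ v =
      v 0 • ![1, 0, (2 * a * v 0 * v 2 - 2 * b * v 0 * v 1 - c * v 1 ^ 2) / (2 * a * v 0 ^ 2)] := by
  rw [unipotent_mulVec]
  ext i
  fin_cases i <;> simp <;> field_simp <;> ring

variable [IsAlgClosed K] {F : MvPolynomial (Fin 3) K} {d : ℕ}

theorem totalDegree_le_two_of_a_eq_zero {b c : K} (hbc : ¬(b = 0 ∧ c = 0)) (hF : Prime F)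
    (hhom : F.IsHomogeneous d)
    (hZ : ∀ t v, eval (unipotent 0 b c t *ᵥ v) F = 0 ↔ eval v F = 0) :
    F.totalDegree ≤ 2 := by
  refine totalDegree_le_of_eval_eq_zero_iff_isRoot (N := X 0 * (C b * X 0 + C c * X 1))
    (g := aeval ![1, Polynomial.X, 0] F) (s := fun v => v 1 / v 0)
    (fac := fun r => X 1 - C r * X 0) hF ?_ ?_ ?_ ?_ ?_ ?_
  · refine mul_ne_zero (X_ne_zero 0) fun hL => hbc ⟨?_, ?_⟩
    · simpa using congrArg (eval ![1, 0, 0]) hL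
    · simpa using congrArg (eval ![0, 1, 0]) hL
  · exact ((isHomogeneous_X K 0).mul
      ((isHomogeneous_C_mul_X b 0).add (isHomogeneous_C_mul_X c 1))).totalDegree_le
  · intro r h
    simpa using congrArg (eval ![0, 1, 0]) h
  · intro r
    exact ((isHomogeneous_X K 1).sub (isHomogeneous_C_mul_X r 0)).totalDegree_le.trans
      one_le_two
  · intro v hv
    rw [map_mul, eval_X] at hv
    simp only [map_sub, map_mul, eval_C, eval_X]
    field_simp [left_ne_zero_of_mul hv]
    ring
  · intro v hv
    simp only [map_mul, eval_X, eval_add, eval_C, ne_eq, mul_eq_zero, not_or] at hv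
    have hline (x : K) : (fun i => (![1, Polynomial.X, 0] i).eval x) = ![1, x, 0] := by
      ext i; fin_cases i <;> simp
    rw [← hZ _ v, unipotent_zero_mulVec_eq_smul b c hv.1 hv.2, hhom.eval_smul_eq_zero_iff hv.1,
      Polynomial.IsRoot, polynomial_eval_aeval, hline]

theorem totalDegree_le_two_of_a_ne_zero [CharZero K] {a b c : K} (ha : a ≠ 0) (hF : Prime F)
    (hhom : F.IsHomogeneous d)
    (hZ : ∀ t v, eval (unipotent a b c t *ᵥ v) F = 0 ↔ eval v F = 0) :
    F.totalDegree ≤ 2 := by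
  have hmon (r : K) (i j : Fin 3) :
      (C r * (X i * X j) : MvPolynomial (Fin 3) K).IsHomogeneous 2 :=
    (isHomogeneous_C _ r).mul ((isHomogeneous_X K i).mul (isHomogeneous_X K j))
  refine totalDegree_le_of_eval_eq_zero_iff_isRoot (N := X 0)
    (g := aeval ![1, 0, Polynomial.X] F)
    (s := fun v => (2 * a * v 0 * v 2 - 2 * b * v 0 * v 1 - c * v 1 ^ 2) / (2 * a * v 0 ^ 2))
    (fac := fun r => C (2 * a) * (X 0 * X 2) - C (2 * b) * (X 0 * X 1) - C c * (X 1 * X 1)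
      - C (2 * a * r) * (X 0 * X 0)) hF (X_ne_zero 0)
    ((isHomogeneous_X K 0).totalDegree_le.trans one_le_two) ?_ ?_ ?_ ?_
  · intro r h
    have h1 : 2 * a * (r + 1) - 2 * a * r = 0 := by
      simpa using congrArg (eval ![1, 0, r + 1]) h
    exact ha (by linear_combination h1 / 2)
  · intro r
    exact ((((hmon _ 0 2).sub (hmon _ 0 1)).sub (hmon c 1 1)).sub (hmon _ 0 0)).totalDegree_le
  · intro v hv
    rw [eval_X] at hv
    simp only [map_sub, map_mul, eval_C, eval_X]
    field_simp
    ring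
  · intro v hv
    simp only [eval_X, ne_eq] at hv
    have hline (x : K) : (fun i => (![1, 0, Polynomial.X] i).eval x) = ![1, 0, x] := by
      ext i; fin_cases i <;> simp
    rw [← hZ _ v, unipotent_mulVec_eq_smul ha b c hv, hhom.eval_smul_eq_zero_iff hv,
      Polynomial.IsRoot, polynomial_eval_aeval, hline]

end Unipotent

theorem irreducible_invariant_curve_degree_le_two
    {K : Type*} [Field K] [IsAlgClosed K] [CharZero K] (a b c : K)
    (habc : ¬(a = 0 ∧ b = 0 ∧ c = 0))
    (γ : K → Matrix (Fin 3) (Fin 3) K)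
    (hγ : ∀ t, γ t = !![1, 0, 0; a * t, 1, 0;
        b * t + (a * c / 2) * t ^ 2, c * t, 1])
    (F : MvPolynomial (Fin 3) K) (hirr : Irreducible F) (d : ℕ)
    (hhom : F.IsHomogeneous d)
    (hinv : ∀ t : K, ∃ l : K, l ≠ 0 ∧ applyMatrix (γ t) F = MvPolynomial.C l * F) :
    d ≤ 2 := by
  obtain rfl : γ = unipotent a b c := funext hγ
  have hZ : ∀ t v, eval (unipotent a b c t *ᵥ v) F = 0 ↔ eval v F = 0 := fun t v => by
    obtain ⟨l, hl, hFl⟩ := hinv t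
    rw [← eval_applyMatrix, hFl, eval_mul, eval_C, mul_eq_zero, or_iff_right hl]
  rw [← hhom.totalDegree hirr.ne_zero]
  by_cases ha : a = 0
  · subst ha
    exact totalDegree_le_two_of_a_eq_zero (fun hbc => habc ⟨rfl, hbc⟩) hirr.prime hhom hZ
  · exact totalDegree_le_two_of_a_ne_zero ha hirr.prime hhom hZ
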